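/- arXiv:2301.08531 — 2 statements merged into one kernel-verified Lean document; each statement's English description precedes it below -/
import Mathlib

section
/- There exist a bound B and constants B₀, C₀ > 0 and 1 < C₁ < C₂ such that for every integer N > B there exist an integer n < B₀·log N and positive integer exponents e₁,…,eₙ with the following property. Letting ℓᵢ denote the (n−i+1)-th smallest prime number and Lᵢ = ℓᵢ^{eᵢ}, and letting Φ(ℓ^e) = ℓ^{e−1}(ℓ+1), one has: √(C₀·log N) ≤ Φ(Lᵢ) < C₀·log N for all 1 ≤ i ≤ n−1; (C₀/2)·log N ≤ Φ(Lₙ) < C₀·log N; and C₁·N ≤ ∏_{i=1}^{n} Φ(Lᵢ) < C₂·N. -/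
/-!
Put `T = 16 log N` and `S = √T`. Every prime `ℓ < T - 1` has a power `ℓ^e` with `Φ(ℓ^e)` in the
window `[S, T)`: either `Φ(ℓ) = ℓ + 1` lies there, or `ℓ < S` and consecutive values of `Φ(ℓ^e)`
differ by the factor `ℓ < S = T / S`.
Going up the primes from `11`, take the shortest run whose window values multiply past
`W = 420 N / T⁴`; their product `G` lies in `[W, W T)`. Each factor is at least `S`, so the run has
length `O(log N / log log N)`, and Chebyshev's lower bound for `π` keeps all its primes below `T`.
What is left, `2 N / G`, lies in `[T³/210, T⁴/210]`. By the intermediate value theorem it splits as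
`x₂ x₃ x₅ x₇` with `x₂ = T/2` and `S ≤ x_ℓ ≤ T/ℓ`, and choosing `Φ(ℓ^e) ∈ [x_ℓ, ℓ x_ℓ)` for
`ℓ = 2, 3, 5, 7` approximates it within the factor `2·3·5·7 = 210`.
-/

/-- `PhiL n e i` is `Φ(Lᵢ)` where `Lᵢ = ℓᵢ^{e i}`, `ℓᵢ` is the `(n-i+1)`-th smallest prime
(`Nat.nth Nat.Prime (n - i)`, zero-indexed), and `Φ(ℓ^e) = ℓ^{e-1} * (ℓ + 1)`. -/
noncomputable def PhiL (n : ℕ) (e : ℕ → ℕ) (i : ℕ) : ℝ :=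
  ((Nat.nth Nat.Prime (n - i)) ^ (e i - 1) * ((Nat.nth Nat.Prime (n - i)) + 1) : ℕ)

open Finset Real

theorem exists_prod_eq_of_mem_Icc {ι : Type*} (s : Finset ι) {a b : ι → ℝ}
    (hab : ∀ i ∈ s, a i ≤ b i) {X : ℝ} (hX : X ∈ Set.Icc (∏ i ∈ s, a i) (∏ i ∈ s, b i)) :
    ∃ x : ι → ℝ, (∀ i ∈ s, x i ∈ Set.Icc (a i) (b i)) ∧ ∏ i ∈ s, x i = X := by
  have hcont : ContinuousOn (fun t : ℝ => ∏ i ∈ s, (a i + t * (b i - a i))) (Set.Icc 0 1) := by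
    fun_prop
  obtain ⟨t, ⟨ht₀, ht₁⟩, hX'⟩ := intermediate_value_Icc zero_le_one hcont (by simpa using hX)
  refine ⟨fun i => a i + t * (b i - a i), fun i hi => ⟨?_, ?_⟩, hX'⟩ <;>
    nlinarith [hab i hi]

theorem exists_prod_range_mem_Ico {f : ℕ → ℝ} {W T : ℝ} {K : ℕ} (hW : 1 < W)
    (hf : ∀ j < K, 0 ≤ f j ∧ f j < T) (hK : W ≤ ∏ j ∈ range K, f j) :
    ∃ m ≤ K, W ≤ ∏ j ∈ range m, f j ∧ ∏ j ∈ range m, f j < W * T := by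
  classical
  have hex : ∃ m, W ≤ ∏ j ∈ range m, f j := ⟨K, hK⟩
  have hK' : Nat.find hex ≤ K := Nat.find_min' hex hK
  refine ⟨Nat.find hex, hK', Nat.find_spec hex, ?_⟩
  obtain ⟨m, hm⟩ : ∃ m, Nat.find hex = m + 1 := by
    refine Nat.exists_eq_add_one_of_ne_zero fun h => ?_
    have := Nat.find_spec hex
    rw [h, prod_range_zero] at this
    linarith
  have hprev : ∏ j ∈ range m, f j < W := not_le.1 (Nat.find_min hex (by omega))
  rw [hm, prod_range_succ]
  exact mul_lt_mul'' hprev (hf m (by omega)).2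
    (prod_nonneg fun j hj => (hf j (by simp at hj; omega)).1) (hf m (by omega)).1

theorem exists_mul_pow_mem_Ico {q c x : ℝ} (hq : 1 < q) (hc : 0 < c) (hcx : c ≤ x) :
    ∃ k : ℕ, x ≤ c * q ^ k ∧ c * q ^ k < q * x := by
  classical
  have hex : ∃ k : ℕ, x ≤ c * q ^ k := by
    obtain ⟨k, hk⟩ := pow_unbounded_of_one_lt (x / c) hq
    exact ⟨k, by rw [div_lt_iff₀ hc] at hk; linarith⟩
  refine ⟨Nat.find hex, Nat.find_spec hex, ?_⟩
  rcases Nat.eq_zero_or_eq_succ_pred (Nat.find hex) with h | h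
  · rw [h, pow_zero, mul_one]
    nlinarith
  · have hprev : c * q ^ (Nat.find hex).pred < x := not_le.1 (Nat.find_min hex (by omega))
    rw [h, pow_succ]
    nlinarith

theorem exists_one_le_and_forall_of_forall_exists {p : ℕ → Prop} {P : ℕ → ℕ → Prop}
    (h : ∀ j, p j → ∃ e, 1 ≤ e ∧ P j e) :
    ∃ e : ℕ → ℕ, (∀ j, 1 ≤ e j) ∧ ∀ j, p j → P j (e j) := by
  classical
  refine ⟨fun j => if hj : p j then (h j hj).choose else 1, fun j => ?_, fun j hj => ?_⟩
  · dsimp only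
    split_ifs with hj
    exacts [(h j hj).choose_spec.1, le_rfl]
  · simpa only [dif_pos hj] using (h j hj).choose_spec.2

def cyclicIsogenyCount (ℓ e : ℕ) : ℕ := ℓ ^ (e - 1) * (ℓ + 1)

theorem cast_cyclicIsogenyCount_add_one (ℓ k : ℕ) :
    (cyclicIsogenyCount ℓ (k + 1) : ℝ) = (ℓ + 1) * ℓ ^ k := by
  simp [cyclicIsogenyCount, mul_comm]

theorem exists_cyclicIsogenyCount_mem_Ico {ℓ : ℕ} (hℓ : 2 ≤ ℓ) {x : ℝ} (hx : ℓ + 1 ≤ x) :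
    ∃ e, 1 ≤ e ∧ x ≤ cyclicIsogenyCount ℓ e ∧ (cyclicIsogenyCount ℓ e : ℝ) < ℓ * x := by
  have hℓ' : (1 : ℝ) < ℓ := by exact_mod_cast hℓ
  obtain ⟨k, hk⟩ := exists_mul_pow_mem_Ico hℓ' (by positivity) hx
  exact ⟨k + 1, by omega, by rwa [cast_cyclicIsogenyCount_add_one]⟩

theorem exists_cyclicIsogenyCount_mem_Ico_of_sq_le {ℓ : ℕ} (hℓ : 2 ≤ ℓ) {S T : ℝ}
    (hST : S ^ 2 ≤ T) (hℓT : ℓ + 1 < T) :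
    ∃ e, 1 ≤ e ∧ S ≤ cyclicIsogenyCount ℓ e ∧ (cyclicIsogenyCount ℓ e : ℝ) < T := by
  rcases le_or_gt S (ℓ + 1) with hS | hS
  · exact ⟨1, le_rfl, by simpa [cyclicIsogenyCount] using hS,
      by simpa [cyclicIsogenyCount] using hℓT⟩
  · obtain ⟨e, he, hSe, heS⟩ := exists_cyclicIsogenyCount_mem_Ico hℓ hS.le
    exact ⟨e, he, hSe, by nlinarith⟩

noncomputable def nthPrimeCyclicCount (e : ℕ → ℕ) (j : ℕ) : ℝ :=
  cyclicIsogenyCount (Nat.nth Nat.Prime j) (e j)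

theorem PhiL_eq (n : ℕ) (e : ℕ → ℕ) (i : ℕ) :
    PhiL n (fun i => e (n - i)) i = nthPrimeCyclicCount e (n - i) :=
  rfl

theorem prod_Icc_PhiL (n : ℕ) (e : ℕ → ℕ) :
    ∏ i ∈ Icc 1 n, PhiL n (fun i => e (n - i)) i = ∏ j ∈ range n, nthPrimeCyclicCount e j := by
  have := prod_Ico_reflect (nthPrimeCyclicCount e) 1 (le_refl (n + 1))
  rw [Nat.add_sub_cancel, Nat.sub_self, Nat.Ico_zero_eq_range] at this
  rw [← this, Ico_add_one_right_eq_Icc]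
  rfl

theorem nthPrimeCyclicCount_ite (e₁ e₂ : ℕ → ℕ) (r j : ℕ) :
    nthPrimeCyclicCount (fun j => if j < r then e₁ j else e₂ j) j =
      if j < r then nthPrimeCyclicCount e₁ j else nthPrimeCyclicCount e₂ j := by
  by_cases h : j < r <;> simp [nthPrimeCyclicCount, h]

theorem prod_range_add_nthPrimeCyclicCount_ite (e₁ e₂ : ℕ → ℕ) (r m : ℕ) :
    ∏ j ∈ range (r + m), nthPrimeCyclicCount (fun j => if j < r then e₁ j else e₂ j) j =
      (∏ j ∈ range r, nthPrimeCyclicCount e₁ j) *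
        ∏ j ∈ range m, nthPrimeCyclicCount e₂ (r + j) := by
  simp only [prod_range_add, nthPrimeCyclicCount_ite]
  congr 1
  · exact prod_congr rfl fun j hj => if_pos (mem_range.1 hj)
  · exact prod_congr rfl fun j _ => if_neg (by omega)

theorem exists_exponents_prod_mem_Ico {s : Finset ℕ} (hs : s.Nonempty) {a : ℕ → ℝ} {T X : ℝ}
    (ha : ∀ j ∈ s, (Nat.nth Nat.Prime j : ℝ) + 1 ≤ a j)
    (hab : ∀ j ∈ s, a j ≤ T / Nat.nth Nat.Prime j)
    (hX : X ∈ Set.Icc (∏ j ∈ s, a j) (∏ j ∈ s, T / Nat.nth Nat.Prime j)) :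
    ∃ e : ℕ → ℕ, (∀ j, 1 ≤ e j) ∧
      (∀ j ∈ s, a j ≤ nthPrimeCyclicCount e j ∧ nthPrimeCyclicCount e j < T) ∧
      X ≤ ∏ j ∈ s, nthPrimeCyclicCount e j ∧
      ∏ j ∈ s, nthPrimeCyclicCount e j < (∏ j ∈ s, (Nat.nth Nat.Prime j : ℝ)) * X := by
  have hp : ∀ j, (2 : ℝ) ≤ Nat.nth Nat.Prime j := fun j => by
    exact_mod_cast (Nat.prime_nth_prime j).two_le
  obtain ⟨x, hx, rfl⟩ := exists_prod_eq_of_mem_Icc s hab hX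
  have hx₀ : ∀ j ∈ s, 0 < x j := fun j hj => by linarith [hp j, ha j hj, (hx j hj).1]
  obtain ⟨e, he, hfit⟩ := exists_one_le_and_forall_of_forall_exists (p := (· ∈ s)) fun j hj =>
    exists_cyclicIsogenyCount_mem_Ico (Nat.prime_nth_prime j).two_le ((ha j hj).trans (hx j hj).1)
  refine ⟨e, he, fun j hj => ⟨(hx j hj).1.trans (hfit j hj).1, (hfit j hj).2.trans_le ?_⟩,
    prod_le_prod (fun j hj => (hx₀ j hj).le) fun j hj => (hfit j hj).1, ?_⟩
  · exact (le_div_iff₀' (by linarith [hp j])).1 (hx j hj).2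
  · rw [← prod_mul_distrib]
    exact prod_lt_prod_of_nonempty (fun j hj => (hx₀ j hj).trans_le (hfit j hj).1)
      (fun j hj => (hfit j hj).2) hs

theorem prod_range_four_nth_prime : ∏ j ∈ range 4, (Nat.nth Nat.Prime j : ℝ) = 210 := by
  simp [prod_range_succ, Nat.nth_prime_zero_eq_two, Nat.nth_prime_one_eq_three,
    Nat.nth_prime_two_eq_five, Nat.nth_prime_three_eq_seven]
  norm_num

theorem nth_prime_le_seven {j : ℕ} (hj : j < 4) : Nat.nth Nat.Prime j ≤ 7 :=
  Nat.nth_prime_three_eq_seven ▸ Nat.nth_monotone Nat.infinite_setOfPred_prime (by omega)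

theorem exists_small_prime_exponents {S T X : ℝ} (hS : 105 ≤ S) (hST : S ^ 2 = T)
    (hX : T ^ 3 / 210 ≤ X) (hX' : X ≤ T ^ 4 / 210) :
    ∃ e : ℕ → ℕ, (∀ j, 1 ≤ e j) ∧
      (∀ j ∈ Ico 1 4, S ≤ nthPrimeCyclicCount e j ∧ nthPrimeCyclicCount e j < T) ∧
      (T / 2 ≤ nthPrimeCyclicCount e 0 ∧ nthPrimeCyclicCount e 0 < T) ∧
      X ≤ ∏ j ∈ range 4, nthPrimeCyclicCount e j ∧
      ∏ j ∈ range 4, nthPrimeCyclicCount e j < 210 * X := by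
  set a : ℕ → ℝ := fun j => if j = 0 then T / 2 else S
  have hp₇ : ∀ j ∈ range 4, (Nat.nth Nat.Prime j : ℝ) ≤ 7 := fun j hj => by
    exact_mod_cast nth_prime_le_seven (mem_range.1 hj)
  have ha : ∀ j ∈ range 4, (Nat.nth Nat.Prime j : ℝ) + 1 ≤ a j := fun j hj => by
    have := hp₇ j hj
    simp only [a]
    split_ifs <;> nlinarith
  have hab : ∀ j ∈ range 4, a j ≤ T / Nat.nth Nat.Prime j := by
    intro j hj
    rcases j with _ | j
    · simp [a, Nat.nth_prime_zero_eq_two]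
    · rw [le_div_iff₀ (Nat.cast_pos.2 (Nat.prime_nth_prime _).pos)]
      simp only [a, Nat.add_one_ne_zero, if_false]
      nlinarith [hp₇ _ hj]
  have hprod_a : ∏ j ∈ range 4, a j = T / 2 * S ^ 3 := by
    simp [a, prod_range_succ']
    ring
  have hprod_b : ∏ j ∈ range 4, T / Nat.nth Nat.Prime j = T ^ 4 / 210 := by
    rw [prod_div_distrib, prod_const, card_range, prod_range_four_nth_prime]
  obtain ⟨e, he, hbounds, hlo, hhi⟩ := exists_exponents_prod_mem_Ico ⟨0, by simp⟩ ha hab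
    ⟨hprod_a ▸ le_trans (by rw [← hST]; nlinarith [pow_pos (by positivity : 0 < S) 5]) hX,
      hprod_b ▸ hX'⟩
  rw [prod_range_four_nth_prime] at hhi
  refine ⟨e, he, fun j hj => ?_, by simpa [a] using hbounds 0 (by simp), hlo, hhi⟩
  obtain ⟨hj₁, hj₄⟩ := mem_Ico.1 hj
  simpa [a, Nat.one_le_iff_ne_zero.1 hj₁] using hbounds j (mem_range.2 hj₄)

theorem exists_big_prime_exponents {S T W : ℝ} {r K : ℕ} (hS : 0 ≤ S) (hST : S ^ 2 ≤ T)
    (hW : 1 < W) (hWK : W ≤ S ^ K) (hprimes : ∀ j < r + K, (Nat.nth Nat.Prime j : ℝ) + 1 < T) :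
    ∃ m ≤ K, ∃ e : ℕ → ℕ, (∀ j, 1 ≤ e j) ∧
      (∀ j < r + K, S ≤ nthPrimeCyclicCount e j ∧ nthPrimeCyclicCount e j < T) ∧
      W ≤ ∏ j ∈ range m, nthPrimeCyclicCount e (r + j) ∧
      ∏ j ∈ range m, nthPrimeCyclicCount e (r + j) < W * T := by
  obtain ⟨e, he, hwin⟩ := exists_one_le_and_forall_of_forall_exists (p := (· < r + K)) fun j hj =>
    exists_cyclicIsogenyCount_mem_Ico_of_sq_le (Nat.prime_nth_prime j).two_le hST (hprimes j hj)
  have hSK : S ^ K ≤ ∏ j ∈ range K, nthPrimeCyclicCount e (r + j) :=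
    calc S ^ K = ∏ _j ∈ range K, S := by rw [prod_const, card_range]
      _ ≤ _ := prod_le_prod (fun _ _ => hS) fun j hj => (hwin (r + j) (by simp at hj; omega)).1
  obtain ⟨m, hmK, hlo, hhi⟩ := exists_prod_range_mem_Ico (T := T) hW
    (fun j hj => ⟨Nat.cast_nonneg _, (hwin (r + j) (by omega)).2⟩) (hWK.trans hSK)
  exact ⟨m, hmK, e, he, hwin, hlo, hhi⟩

theorem exists_good_degree_exponents {S T N : ℝ} {K : ℕ} (hS : 105 ≤ S) (hST : S ^ 2 = T)
    (hTN : T ^ 4 < 420 * N) (hNK : N ≤ S ^ K)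
    (hprimes : ∀ j < 4 + K, (Nat.nth Nat.Prime j : ℝ) + 1 < T) :
    ∃ m ≤ K, ∃ e : ℕ → ℕ, (∀ j, 1 ≤ e j) ∧
      (∀ j, 1 ≤ j → j < 4 + m → S ≤ nthPrimeCyclicCount e j ∧ nthPrimeCyclicCount e j < T) ∧
      (T / 2 ≤ nthPrimeCyclicCount e 0 ∧ nthPrimeCyclicCount e 0 < T) ∧
      2 * N ≤ ∏ j ∈ range (4 + m), nthPrimeCyclicCount e j ∧
      ∏ j ∈ range (4 + m), nthPrimeCyclicCount e j < 420 * N := by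
  have hT : 0 < T := by rw [← hST]; positivity
  have hN : 0 < N := by linarith [pow_pos hT 4]
  have hW : 1 < 420 * N / T ^ 4 := (one_lt_div (by positivity)).2 hTN
  have hWN : 420 * N / T ^ 4 ≤ N := by
    rw [div_le_iff₀ (by positivity)]
    have : (5 : ℝ) ^ 4 ≤ T ^ 4 := pow_le_pow_left₀ (by norm_num) (by nlinarith) 4
    nlinarith
  -- `W = 420 N / T⁴` makes the part `2 N / G` left to the primes `2, 3, 5, 7` fall into
  -- the range `[T³/210, T⁴/210]` that they can absorb.
  obtain ⟨m, hmK, eBig, heBig, hwin, hGlo, hGhi⟩ :=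
    exists_big_prime_exponents (r := 4) (by linarith) hST.le hW (hWN.trans hNK) hprimes
  set G := ∏ j ∈ range m, nthPrimeCyclicCount eBig (4 + j)
  have hG : 0 < G := by linarith
  have hXlo : T ^ 3 / 210 ≤ 2 * N / G := by
    rw [le_div_iff₀ hG]
    calc T ^ 3 / 210 * G ≤ T ^ 3 / 210 * (420 * N / T ^ 4 * T) := by gcongr
      _ = 2 * N := by field_simp; ring
  have hXhi : 2 * N / G ≤ T ^ 4 / 210 := by
    rw [div_le_iff₀ hG]
    calc 2 * N = T ^ 4 / 210 * (420 * N / T ^ 4) := by field_simp; ring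
      _ ≤ T ^ 4 / 210 * G := by gcongr
  obtain ⟨eSmall, heSmall, hmid, hlast, hlo, hhi⟩ := exists_small_prime_exponents hS hST hXlo hXhi
  refine ⟨m, hmK, fun j => if j < 4 then eSmall j else eBig j, fun j => ?_, fun j hj₁ hj => ?_,
    ?_, ?_, ?_⟩
  · dsimp only
    split_ifs
    exacts [heSmall j, heBig j]
  · rw [nthPrimeCyclicCount_ite]
    split_ifs with h
    exacts [hmid j (mem_Ico.2 ⟨hj₁, h⟩), hwin j (by omega)]
  · rwa [nthPrimeCyclicCount_ite, if_pos four_pos]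
  · rw [prod_range_add_nthPrimeCyclicCount_ite]
    exact (div_le_iff₀ hG).1 hlo
  · rw [prod_range_add_nthPrimeCyclicCount_ite]
    calc (∏ j ∈ range 4, nthPrimeCyclicCount eSmall j) * G < 210 * (2 * N / G) * G :=
          mul_lt_mul_of_pos_right hhi hG
      _ = 420 * N := by field_simp; ring

open scoped Nat.Prime in
theorem nth_prime_le_of_lt_chebyshev_bound {x : ℝ} (hx : 1 < x) {j : ℕ}
    (hj : (j : ℝ) < ((x - 1) * log 2 - log (x + 2)) / log x) : (Nat.nth Nat.Prime j : ℝ) ≤ x := by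
  have hπ : j < π ⌊x⌋₊ := by exact_mod_cast hj.trans_le (Chebyshev.pi_ge' hx)
  have hlt : Nat.nth Nat.Prime j < ⌊x⌋₊ + 1 := Nat.nth_lt_of_lt_count hπ
  exact (Nat.cast_le.2 (Nat.lt_succ_iff.1 hlt)).trans (Nat.floor_le (by linarith))

theorem log_sixteen_mul_le_half {L : ℝ} (hL : 128 ≤ L) : log (16 * L) ≤ L / 2 := by
  rw [log_le_iff_le_exp (by positivity)]
  have := pow_div_factorial_le_exp (x := L / 2) (by positivity) 2
  norm_num [Nat.factorial] at this
  nlinarith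

theorem sixteen_mul_pow_four_lt_exp {L : ℝ} (hL : 20000 ≤ L) : (16 * L) ^ 4 < 420 * exp L := by
  have := pow_div_factorial_le_exp (x := L) (by positivity) 5
  norm_num [Nat.factorial] at this
  nlinarith [pow_pos (show 0 < L by positivity) 4]

theorem four_le_log_sixteen_mul {L : ℝ} (hL : 4 ≤ L) : 4 ≤ log (16 * L) := by
  rw [le_log_iff_exp_le (by positivity), show (4 : ℝ) = 2 + 2 by norm_num, exp_add]
  have : exp 2 < 8 := by
    rw [show (2 : ℝ) = 1 + 1 by norm_num, exp_add]
    nlinarith [exp_one_lt_d9, exp_pos 1]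
  nlinarith [exp_pos 2]

theorem add_five_le_chebyshev_bound {L : ℝ} (hL : 128 ≤ L) :
    2 * L / log (16 * L) + 5 ≤ ((8 * L - 1) * log 2 - log (8 * L + 2)) / log (8 * L) := by
  have hlogT := log_sixteen_mul_le_half hL
  have hlogT₀ : 0 < log (16 * L) := log_pos (by linarith)
  have hlog8 : 0 < log (8 * L) := log_pos (by linarith)
  have hnum : 2 * L + 5 * log (16 * L) ≤ (8 * L - 1) * log 2 - log (8 * L + 2) := by
    have := log_le_log (by linarith) (by linarith : 8 * L + 2 ≤ 16 * L)
    nlinarith [log_two_gt_d9]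
  calc 2 * L / log (16 * L) + 5 = (2 * L + 5 * log (16 * L)) / log (16 * L) := by
        rw [div_add' _ _ _ hlogT₀.ne']
    _ ≤ ((8 * L - 1) * log 2 - log (8 * L + 2)) / log (16 * L) := by gcongr
    _ ≤ ((8 * L - 1) * log 2 - log (8 * L + 2)) / log (8 * L) :=
        div_le_div_of_nonneg_left (by linarith) hlog8 (log_le_log (by linarith) (by linarith))

theorem exists_basis_length {L : ℝ} (hL : 20000 ≤ L) :
    ∃ K : ℕ, exp L ≤ √(16 * L) ^ K ∧ (K : ℝ) + 4 < L ∧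
      ∀ j < 4 + K, (Nat.nth Nat.Prime j : ℝ) + 1 < 16 * L := by
  have hlogT := four_le_log_sixteen_mul (by linarith : 4 ≤ L)
  set K := ⌈2 * L / log (16 * L)⌉₊
  have hK : K < 2 * L / log (16 * L) + 1 := Nat.ceil_lt_add_one (by positivity)
  refine ⟨K, ?_, ?_, fun j hj => ?_⟩
  · rw [← exp_log (pow_pos (by positivity) K), log_pow, exp_le_exp, log_sqrt (by positivity)]
    have := (div_le_iff₀ (by linarith : 0 < log (16 * L))).1 (Nat.le_ceil (2 * L / log (16 * L)))
    linarith
  · have : 2 * L / log (16 * L) ≤ L / 2 := by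
      rw [div_le_iff₀ (by linarith)]
      nlinarith
    linarith
  · have hjK : (j : ℝ) < 2 * L / log (16 * L) + 5 := by
      have : (j : ℝ) < 4 + K := by exact_mod_cast hj
      linarith only [this, hK]
    have := nth_prime_le_of_lt_chebyshev_bound (x := 8 * L) (by linarith)
      (hjK.trans_le (add_five_le_chebyshev_bound (by linarith)))
    linarith

/-- Existence of a good-degree basis:  there are a bound `B` and constants
`B₀, C₀ > 0`, `1 < C₁ < C₂` such that every integer `N > B` admits `n < B₀ * log N`
and exponents `e₁, …, eₙ ≥ 1` with
`√(C₀ log N) ≤ Φ(Lᵢ) < C₀ log N` for `1 ≤ i ≤ n-1`,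
`(C₀/2) log N ≤ Φ(Lₙ) < C₀ log N`, and `C₁ N ≤ ∏ Φ(Lᵢ) < C₂ N`. -/
theorem good_degree_basis_exists :
    ∃ (B : ℕ) (B₀ C₀ C₁ C₂ : ℝ),
      0 < B₀ ∧ 0 < C₀ ∧ 1 < C₁ ∧ C₁ < C₂ ∧
      ∀ N : ℕ, B < N →
        ∃ (n : ℕ) (e : ℕ → ℕ), 0 < n ∧ (n : ℝ) < B₀ * Real.log N ∧
          (∀ i, 1 ≤ i → i ≤ n → 1 ≤ e i) ∧
          (∀ i, 1 ≤ i → i ≤ n - 1 →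
            Real.sqrt (C₀ * Real.log N) ≤ PhiL n e i ∧ PhiL n e i < C₀ * Real.log N) ∧
          (C₀ / 2 * Real.log N ≤ PhiL n e n ∧ PhiL n e n < C₀ * Real.log N) ∧
          C₁ * N ≤ ∏ i ∈ Finset.Icc 1 n, PhiL n e i ∧
          ∏ i ∈ Finset.Icc 1 n, PhiL n e i < C₂ * N := by
  refine ⟨⌈exp 20000⌉₊, 1, 16, 2, 420, by norm_num, by norm_num, by norm_num, by norm_num,
    fun N hN => ?_⟩
  have hN₀ : (0 : ℝ) < N := by exact_mod_cast Nat.zero_lt_of_lt hN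
  have hL : 20000 ≤ log N :=
    (le_log_iff_exp_le hN₀).2 ((Nat.le_ceil _).trans (by exact_mod_cast hN.le))
  obtain ⟨K, hKN, hKL, hprimes⟩ := exists_basis_length hL
  have hTN := sixteen_mul_pow_four_lt_exp hL
  rw [exp_log hN₀] at hKN hTN
  obtain ⟨m, hmK, e, he, hmid, hlast, hlo, hhi⟩ := exists_good_degree_exponents
    (le_sqrt_of_sq_le (by linarith)) (sq_sqrt (by positivity)) hTN hKN hprimes
  refine ⟨4 + m, fun i => e (4 + m - i), by omega, ?_, fun i _ _ => he _,
    fun i hi₁ hi => hmid (4 + m - i) (by omega) (by omega), ?_,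
    by rw [prod_Icc_PhiL]; exact ⟨hlo, hhi⟩⟩
  · have : (m : ℝ) ≤ K := by exact_mod_cast hmK
    push_cast
    linarith
  · rw [PhiL_eq, Nat.sub_self]
    exact ⟨by linarith [hlast.1], hlast.2⟩
end

section
/- There exists a constant C₃ > 0 with the following property: for every integer N > B admitting a good-degree basis L₁, L₂, …, Lₙ with n > 7, one has ∑_{i=1}^{n−6} (n−i)·∏_{j=1}^{i} Φ(Lⱼ) < C₃·N/(log N)². -/
/-- `L₁, …, Lₙ` (encoded by the exponent function `e`) is a good-degree basis for `N`,
with respect to the constants `C₀, C₁, C₂`. -/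
def GoodDegreeBasis (C₀ C₁ C₂ : ℝ) (N n : ℕ) (e : ℕ → ℕ) : Prop :=
  (∀ i, 1 ≤ i → i ≤ n → 1 ≤ e i) ∧
  (∀ i, 1 ≤ i → i ≤ n - 1 →
    Real.sqrt (C₀ * Real.log N) ≤ PhiL n e i ∧ PhiL n e i < C₀ * Real.log N) ∧
  (C₀ / 2 * Real.log N ≤ PhiL n e n ∧ PhiL n e n < C₀ * Real.log N) ∧
  C₁ * N ≤ ∏ i ∈ Finset.Icc 1 n, PhiL n e i ∧
  ∏ i ∈ Finset.Icc 1 n, PhiL n e i < C₂ * N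

open Finset

lemma three_le_PhiL (n : ℕ) (e : ℕ → ℕ) (i : ℕ) : 3 ≤ PhiL n e i := by
  have hp : 2 ≤ Nat.nth Nat.Prime (n - i) := (Nat.prime_nth_prime (n - i)).two_le
  have hpow : 1 ≤ Nat.nth Nat.Prime (n - i) ^ (e i - 1) := Nat.one_le_pow _ _ (by omega)
  unfold PhiL
  exact_mod_cast le_trans (by omega) (Nat.mul_le_mul_right _ hpow)

lemma PhiL_nonneg (n : ℕ) (e : ℕ → ℕ) (i : ℕ) : 0 ≤ PhiL n e i :=
  zero_le_three.trans (three_le_PhiL n e i)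

lemma prod_Icc_one_mul_pow_mul_le {f : ℕ → ℝ} (hf : ∀ j, 0 ≤ f j) {i n : ℕ} (hin : i < n)
    {s a : ℝ} (hs : 0 ≤ s) (hmid : ∀ j ∈ Ioo i n, s ≤ f j) (hlast : a ≤ f n) (ha : 0 ≤ a) :
    (∏ j ∈ Icc 1 i, f j) * (s ^ (n - i - 1) * a) ≤ ∏ j ∈ Icc 1 n, f j := by
  have hsplit : ∏ j ∈ Icc 1 n, f j = (∏ j ∈ Icc 1 i, f j) * ((∏ j ∈ Ioo i n, f j) * f n) := by
    have hIcc : ∀ m, Icc 1 m = Ioc 0 m := Icc_add_one_left_eq_Ioc 0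
    rw [hIcc, hIcc, ← prod_Ioc_consecutive _ (Nat.zero_le i) hin.le, ← Ioo_insert_right hin,
      prod_insert (by simp), mul_comm (f n)]
  have hmid_prod : s ^ (n - i - 1) ≤ ∏ j ∈ Ioo i n, f j := by
    simpa [Nat.card_Ioo] using prod_le_prod (fun _ _ ↦ hs) hmid
  rw [hsplit]
  gcongr <;> exact prod_nonneg fun j _ ↦ hf j

lemma sum_natCast_mul_pow_le_of_injOn {ι : Type*} {S : Finset ι} {g : ι → ℕ}
    (hg : Set.InjOn g S) {t : ℝ} (ht₀ : 0 ≤ t) (ht₁ : t < 1) :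
    ∑ i ∈ S, (g i : ℝ) * t ^ g i ≤ t / (1 - t) ^ 2 := by
  have hnorm : ‖t‖ < 1 := by rwa [Real.norm_of_nonneg ht₀]
  rw [← sum_image (f := fun k : ℕ ↦ (k : ℝ) * t ^ k) hg,
    ← tsum_coe_mul_geometric_of_norm_lt_one hnorm]
  exact (by simpa using summable_pow_mul_geometric_of_norm_lt_one 1 hnorm : Summable _).sum_le_tsum
    _ fun k _ ↦ by positivity

lemma natCast_mul_pow_succ_le {t : ℝ} (ht : 0 ≤ t) {k : ℕ} (hk : 6 ≤ k) :
    (k : ℝ) * t ^ (k + 1) ≤ 2 * t ^ 4 * ((k - 3 : ℕ) * t ^ (k - 3)) := by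
  obtain ⟨m, rfl⟩ : ∃ m, k = m + 3 := ⟨k - 3, by omega⟩
  have hm : (3 : ℝ) ≤ m := by exact_mod_cast (by omega : 3 ≤ m)
  rw [Nat.add_sub_cancel, show m + 3 + 1 = 4 + m by ring, pow_add]
  push_cast
  have : 0 ≤ t ^ 4 * t ^ m := by positivity
  nlinarith

namespace GoodDegreeBasis

variable {C₀ C₁ C₂ : ℝ} {N n : ℕ} {e : ℕ → ℕ}

lemma three_lt_mul_log (h : GoodDegreeBasis C₀ C₁ C₂ N n e) : 3 < C₀ * Real.log N :=
  (three_le_PhiL n e n).trans_lt h.2.2.1.2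

lemma prod_Icc_le (h : GoodDegreeBasis C₀ C₁ C₂ N n e) {i : ℕ} (hin : i < n) :
    ∏ j ∈ Icc 1 i, PhiL n e j
      ≤ 2 * (∏ j ∈ Icc 1 n, PhiL n e j) * (√(C₀ * Real.log N))⁻¹ ^ (n - i + 1) := by
  have hpos := h.three_lt_mul_log
  obtain ⟨-, hmid, ⟨hlast, -⟩, -⟩ := h
  set s := √(C₀ * Real.log N)
  have hs : 0 < s := Real.sqrt_pos.mpr (by linarith)
  have hs2 : s ^ 2 = C₀ * Real.log N := Real.sq_sqrt (by linarith)
  have key := prod_Icc_one_mul_pow_mul_le (PhiL_nonneg n e) hin hs.le (a := s ^ 2 / 2)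
    (fun j hj ↦ (hmid j (by simp at hj; omega) (by simp at hj; omega)).1)
    (by linarith) (by positivity)
  have hpow : s ^ (n - i - 1) * (s ^ 2 / 2) = s ^ (n - i + 1) / 2 := by
    rw [show n - i + 1 = n - i - 1 + 2 by omega, pow_add]; ring
  rw [hpow, ← mul_div_assoc, div_le_iff₀ two_pos] at key
  rw [inv_pow, ← div_eq_mul_inv, le_div_iff₀ (by positivity)]
  linarith

lemma inv_sqrt_mul_log_le (h : GoodDegreeBasis C₀ C₁ C₂ N n e) :
    (√(C₀ * Real.log N))⁻¹ ≤ 3 / 5 := by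
  have hpos := h.three_lt_mul_log
  rw [inv_le_comm₀ (Real.sqrt_pos.mpr (by linarith)) (by norm_num),
    Real.le_sqrt (by norm_num) (by linarith)]
  linarith

lemma sum_mul_prod_Icc_le (h : GoodDegreeBasis C₀ C₁ C₂ N n e) :
    ∑ i ∈ Icc 1 (n - 6), ((n : ℝ) - i) * ∏ j ∈ Icc 1 i, PhiL n e j
      ≤ 4 * (∏ j ∈ Icc 1 n, PhiL n e j) * (√(C₀ * Real.log N))⁻¹ ^ 4
        * ((√(C₀ * Real.log N))⁻¹ / (1 - (√(C₀ * Real.log N))⁻¹) ^ 2) := by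
  set P := ∏ j ∈ Icc 1 n, PhiL n e j
  set t := (√(C₀ * Real.log N))⁻¹
  have ht₀ : 0 ≤ t := inv_nonneg.mpr (Real.sqrt_nonneg _)
  have hP : 0 ≤ P := prod_nonneg fun j _ ↦ PhiL_nonneg n e j
  have hterm : ∀ i ∈ Icc 1 (n - 6), ((n : ℝ) - i) * ∏ j ∈ Icc 1 i, PhiL n e j
      ≤ 4 * P * t ^ 4 * ((n - i - 3 : ℕ) * t ^ (n - i - 3)) := by
    intro i hi
    obtain ⟨hi₁, hi₂⟩ := mem_Icc.mp hi
    rw [← Nat.cast_sub (by omega)]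
    calc ((n - i : ℕ) : ℝ) * ∏ j ∈ Icc 1 i, PhiL n e j
        ≤ (n - i : ℕ) * (2 * P * t ^ (n - i + 1)) := by
          gcongr; exact h.prod_Icc_le (by omega)
      _ = 2 * P * ((n - i : ℕ) * t ^ (n - i + 1)) := by ring
      _ ≤ 2 * P * (2 * t ^ 4 * ((n - i - 3 : ℕ) * t ^ (n - i - 3))) :=
          mul_le_mul_of_nonneg_left (natCast_mul_pow_succ_le ht₀ (by omega)) (by positivity)
      _ = _ := by ring
  refine (sum_le_sum hterm).trans ?_
  rw [← mul_sum]
  gcongr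
  refine sum_natCast_mul_pow_le_of_injOn (fun a ha b hb hab ↦ ?_) ht₀
    (by linarith [h.inv_sqrt_mul_log_le])
  simp only [coe_Icc, Set.mem_Icc] at ha hb hab
  omega

end GoodDegreeBasis

/-- For the fixed constants `B, C₀, C₁, C₂` of the good-degree-basis existence lemma,
there is a constant `C₃ > 0` such that for every `N > B` admitting a good-degree basis
`L₁, …, Lₙ` with `n > 7`, one has
`∑_{i=1}^{n-6} (n - i) ∏_{j=1}^{i} Φ(Lⱼ) < C₃ * N / (log N)²`. -/
theorem good_degree_basis_critical_bound
    (B : ℕ) (C₀ C₁ C₂ : ℝ) (hC₀ : 0 < C₀) (hC₁ : 1 < C₁) (hC₁₂ : C₁ < C₂) :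
    ∃ C₃ : ℝ, 0 < C₃ ∧
      ∀ (N n : ℕ) (e : ℕ → ℕ), B < N → 7 < n → GoodDegreeBasis C₀ C₁ C₂ N n e →
        ∑ i ∈ Finset.Icc 1 (n - 6), ((n : ℝ) - i) * ∏ j ∈ Finset.Icc 1 i, PhiL n e j
          < C₃ * N / Real.log N ^ 2 := by
  have hC₂ : 0 < C₂ := by linarith
  refine ⟨15 * C₂ / C₀ ^ 2, by positivity, fun N n e _ _ h ↦ ?_⟩
  set L := Real.log N
  set t := (√(C₀ * L))⁻¹
  have hL : 3 < C₀ * L := h.three_lt_mul_log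
  have ht : t ≤ 3 / 5 := h.inv_sqrt_mul_log_le
  have ht₀ : 0 < t := inv_pos.mpr (Real.sqrt_pos.mpr (by linarith))
  have ht4 : t ^ 4 = 1 / (C₀ * L) ^ 2 := by
    rw [inv_pow, show 4 = 2 * 2 by rfl, pow_mul, Real.sq_sqrt (by linarith), one_div]
  have hgeom : t / (1 - t) ^ 2 ≤ 15 / 4 := by
    rw [div_le_iff₀ (by nlinarith)]; nlinarith
  have hP : 0 ≤ ∏ j ∈ Icc 1 n, PhiL n e j := prod_nonneg fun j _ ↦ PhiL_nonneg n e j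
  calc _ ≤ 4 * (∏ j ∈ Icc 1 n, PhiL n e j) * t ^ 4 * (15 / 4) :=
        h.sum_mul_prod_Icc_le.trans (by gcongr)
    _ = 15 * t ^ 4 * ∏ j ∈ Icc 1 n, PhiL n e j := by ring
    _ < 15 * t ^ 4 * (C₂ * N) := by gcongr; exact h.2.2.2.2
    _ = 15 * C₂ / C₀ ^ 2 * N / L ^ 2 := by rw [ht4]; field_simp
end
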